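/- With the semilinear volatility $v(s,x) = \sigma \frac{T}{T-s} x$ and information process $I_t = B_t + \int_0^t v(s,X)\,\mathrm{d}s$, the exponent in the filtering density satisfies the closed-form identity $\int_0^t v(s,x)\,\mathrm{d}I_s - \tfrac{1}{2}\int_0^t v(s,x)^2\,\mathrm{d}s = \frac{T}{T-t}\left(\sigma x\, \xi_{tT} - \tfrac{1}{2}\sigma^2 x^2 t\right)$, where $\xi_{tT} = \sigma X t + \beta_{tT}$ and $\beta_{tT} = (T-t)\int_0^t \frac{\mathrm{d}B_s}{T-s}$. -/

import Mathlib

/-!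
Since `v(s,x) v(s,y) = σ²T² x y / (T-s)²` and `∫₀ᵗ (T-s)⁻² ds = 1/(T-t) - 1/T = t / (T (T-t))`,
both time integrals are explicit multiples of `t / (T-t)`; substituting `M t = β_{tT} / (T-t)` and
`β_{tT} = ξ_{tT} - σ X t`, the terms in `X` agree on both sides and what remains is a rational identity.
-/

lemma integral_inv_sub_sq {T a b : ℝ} (ha : a < T) (hb : b < T) :
    ∫ s in a..b, ((T - s) ^ 2)⁻¹ = (T - b)⁻¹ - (T - a)⁻¹ := by
  have hne : ∀ s ∈ Set.uIcc a b, T - s ≠ 0 := fun s hs =>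
    (sub_pos.2 (lt_of_le_of_lt hs.2 (max_lt ha hb))).ne'
  have hderiv : ∀ s ∈ Set.uIcc a b, HasDerivAt (fun u => (T - u)⁻¹) ((T - s) ^ 2)⁻¹ s := by
    intro s hs
    have hsub : HasDerivAt (fun u => T - u) (-1) s := by
      simpa using (hasDerivAt_id s).const_sub T
    simpa using hsub.fun_inv (hne s hs)
  have hcont : ContinuousOn (fun s => ((T - s) ^ 2)⁻¹) (Set.uIcc a b) :=
    (continuousOn_const.sub continuousOn_id).pow 2 |>.inv₀ fun s hs => pow_ne_zero 2 (hne s hs)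
  exact intervalIntegral.integral_eq_sub_of_hasDerivAt hderiv hcont.intervalIntegrable

lemma integral_div_sub_mul_div_sub {T a b : ℝ} (ha : a < T) (hb : b < T) (c x y : ℝ) :
    ∫ s in a..b, c / (T - s) * x * (c / (T - s) * y)
      = c ^ 2 * x * y * ((T - b)⁻¹ - (T - a)⁻¹) := by
  have hintegrand : (fun s => c / (T - s) * x * (c / (T - s) * y))
      = fun s => c ^ 2 * x * y * ((T - s) ^ 2)⁻¹ := by
    funext s
    rw [← inv_pow]
    ring
  rw [hintegrand, intervalIntegral.integral_const_mul, integral_inv_sub_sq ha hb]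

theorem stmt_8_general (T σ : ℝ)
    {Ω : Type*} (X : Ω → ℝ) (M : ℝ → Ω → ℝ)
    (v : ℝ → ℝ → ℝ) (hv : ∀ s x, v s x = σ * T / (T - s) * x)
    (β : ℝ → Ω → ℝ) (hβ : ∀ t ω, β t ω = (T - t) * M t ω)
    (ξ : ℝ → Ω → ℝ) (hξ : ∀ t ω, ξ t ω = σ * X ω * t + β t ω) :
    ∀ t ∈ Set.Ico (0:ℝ) T, ∀ x : ℝ, ∀ ω : Ω,
      (σ * T * x * M t ω + ∫ s in (0:ℝ)..t, v s x * v s (X ω))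
          - (1/2) * ∫ s in (0:ℝ)..t, (v s x)^2
        = T / (T - t) * (σ * x * ξ t ω - (1/2) * σ^2 * x^2 * t) := by
  rintro t ⟨ht0, htT⟩ x ω
  have hT0 : 0 < T := ht0.trans_lt htT
  have hTt : T - t ≠ 0 := (sub_pos.2 htT).ne'
  simp only [hv, sq (σ * T / (T - _) * x),
    integral_div_sub_mul_div_sub hT0 htT, hξ, hβ, sub_zero]
  field_simp
  ring

/-- closed form of the exponent in the filtering density for the
semilinear volatility `v(s,x) = σ T x/(T-s)`.  Here `M t = ∫₀ᵗ (T-s)⁻¹ dB_s`, so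
that `∫₀ᵗ v(s,x) dI_s = σ T x * M t + ∫₀ᵗ v(s,x) v(s,X) ds`,
`β_{tT} = (T-t) M t` is the Brownian bridge and `ξ_{tT} = σ X t + β_{tT}`. -/
theorem stmt_8 (T σ : ℝ) (hT : 0 < T) (hσ : 0 < σ)
    {Ω : Type*} (X : Ω → ℝ) (M : ℝ → Ω → ℝ)
    (v : ℝ → ℝ → ℝ) (hv : ∀ s x, v s x = σ * T / (T - s) * x)
    (β : ℝ → Ω → ℝ) (hβ : ∀ t ω, β t ω = (T - t) * M t ω)
    (ξ : ℝ → Ω → ℝ) (hξ : ∀ t ω, ξ t ω = σ * X ω * t + β t ω) :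
    ∀ t ∈ Set.Ico (0:ℝ) T, ∀ x : ℝ, ∀ ω : Ω,
      (σ * T * x * M t ω + ∫ s in (0:ℝ)..t, v s x * v s (X ω))
          - (1/2) * ∫ s in (0:ℝ)..t, (v s x)^2
        = T / (T - t) * (σ * x * ξ t ω - (1/2) * σ^2 * x^2 * t) :=
  stmt_8_general T σ X M v hv β hβ ξ hξ
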